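/- Lipschitz property of the smoothed probability map under Gaussian smoothing: for measurable h : ℝ → [0,1], the function H(x) = E[h(x+ε)] with ε ~ N(0,σ²) satisfies that Φ⁻¹ ∘ H (where defined and H ∈ (0,1)) is (1/σ)-Lipschitz: |Φ⁻¹(H(x)) − Φ⁻¹(H(x'))| ≤ |x − x'| / σ. -/

import Mathlib

/-!
Neyman–Pearson for the Gaussian shift family: the likelihood ratio of `N(b, σ²)` to `N(a, σ²)`
is increasing for `a ≤ b`, so among all tests `g : ℝ → [0, 1]` with mean `p` under `N(a, σ²)`
the half-line indicator `1_{(-∞, c]}` has the smallest mean under `N(b, σ²)`. That mean is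
`Φ(Φ⁻¹(p) - (b - a) / σ)`, whence `Φ⁻¹(H b) ≥ Φ⁻¹(H a) - (b - a) / σ`. The reflection `t ↦ -t`
gives the reverse inequality.
-/

open MeasureTheory ProbabilityTheory Real Set

/-- Standard Gaussian CDF. -/
noncomputable def Phi (t : ℝ) : ℝ :=
  ∫ u in Set.Iic t, (Real.sqrt (2 * Real.pi))⁻¹ * Real.exp (-u ^ 2 / 2)

/-- Inverse of the standard Gaussian CDF. -/
noncomputable def PhiInv : ℝ → ℝ := Function.invFun Phi

/-- Isotropic Gaussian measure `N(x, σ²I)` on `ℝᵈ`. -/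
noncomputable def gaussPi (d : ℕ) (x : EuclideanSpace ℝ (Fin d)) (σ : NNReal) :
    Measure (EuclideanSpace ℝ (Fin d)) :=
  Measure.map (MeasurableEquiv.toLp 2 (Fin d → ℝ))
    (Measure.pi fun i => gaussianReal (x i) (σ ^ 2))

open scoped NNReal

lemma Phi_eq_integral_gaussianPDFReal (t : ℝ) :
    Phi t = ∫ u in Iic t, gaussianPDFReal 0 1 u := by
  simp [Phi, gaussianPDFReal]

lemma Phi_eq_cdf : Phi = cdf (gaussianReal 0 1) := by
  ext t
  rw [cdf_eq_real, measureReal_def, gaussianReal_apply_eq_integral 0 one_ne_zero,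
    ENNReal.toReal_ofReal (integral_nonneg fun u => gaussianPDFReal_nonneg 0 1 u),
    Phi_eq_integral_gaussianPDFReal]

lemma continuous_Phi : Continuous Phi := by
  refine continuous_iff_continuousAt.2 fun t => ?_
  simp_rw [funext Phi_eq_integral_gaussianPDFReal]
  exact ((integrable_gaussianPDFReal 0 1).integrableOn.continuousOn_Iic_primitive_Iic
    (a₀ := t + 1)).continuousAt (Iic_mem_nhds (lt_add_one t))

lemma strictMono_Phi : StrictMono Phi := by
  intro a b hab
  have hint := integrable_gaussianPDFReal 0 1
  have hpos : 0 < ∫ u in a..b, gaussianPDFReal 0 1 u :=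
    intervalIntegral.intervalIntegral_pos_of_pos_on hint.intervalIntegrable
      (fun u _ => gaussianPDFReal_pos 0 1 u one_ne_zero) hab
  rw [← intervalIntegral.integral_Iic_sub_Iic hint.restrict hint.restrict,
    ← Phi_eq_integral_gaussianPDFReal, ← Phi_eq_integral_gaussianPDFReal] at hpos
  linarith

lemma Phi_PhiInv {p : ℝ} (hp : p ∈ Ioo 0 1) : Phi (PhiInv p) = p := by
  refine Function.invFun_eq ?_
  rw [Phi_eq_cdf]
  obtain ⟨a, ha⟩ := (tendsto_cdf_atBot _ |>.eventually_lt_const hp.1).exists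
  obtain ⟨b, hb⟩ := (tendsto_cdf_atTop _ |>.eventually_const_lt hp.2).exists
  exact intermediate_value_univ a b (Phi_eq_cdf ▸ continuous_Phi) ⟨ha.le, hb.le⟩

lemma gaussianReal_real_Iic {σ : ℝ≥0} (hσ : σ ≠ 0) (m c : ℝ) :
    (gaussianReal m (σ ^ 2)).real (Iic c) = Phi ((c - m) / σ) := by
  have hmap : (gaussianReal m (σ ^ 2)).map (fun x => (x - m) / σ) = gaussianReal 0 1 := by
    have hcomp : (fun x => (x - m) / σ) = (· / (σ : ℝ)) ∘ (· - m) := rfl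
    rw [hcomp, ← Measure.map_map (by fun_prop) (by fun_prop), gaussianReal_map_sub_const,
      gaussianReal_map_div_const]
    congr 1
    · simp
    · ext; simp [hσ]
  have hσ' : (0 : ℝ) < σ := by positivity
  rw [Phi_eq_cdf, cdf_eq_real, ← hmap, map_measureReal_apply (by fun_prop) measurableSet_Iic]
  congr 1
  ext x
  simp [div_le_div_iff_of_pos_right hσ']

-- The likelihood ratio `gaussianPDFReal b v / gaussianPDFReal a v` is increasing when `a ≤ b`.
lemma gaussianPDFReal_mul_le_mul_of_le {v : ℝ≥0} {a b t c : ℝ} (hab : a ≤ b) (htc : t ≤ c) :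
    gaussianPDFReal b v t * gaussianPDFReal a v c ≤
      gaussianPDFReal b v c * gaussianPDFReal a v t := by
  have hexp : -(t - b) ^ 2 / (2 * v) + -(c - a) ^ 2 / (2 * v) ≤
      -(c - b) ^ 2 / (2 * v) + -(t - a) ^ 2 / (2 * v) := by
    rw [← add_div, ← add_div]
    refine div_le_div_of_nonneg_right ?_ (by positivity)
    nlinarith [mul_nonneg (sub_nonneg.2 hab) (sub_nonneg.2 htc)]
  simp only [gaussianPDFReal]
  calc _ = (√(2 * π * v))⁻¹ ^ 2 * rexp (-(t - b) ^ 2 / (2 * v) + -(c - a) ^ 2 / (2 * v)) := by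
        rw [exp_add]; ring
    _ ≤ (√(2 * π * v))⁻¹ ^ 2 * rexp (-(c - b) ^ 2 / (2 * v) + -(t - a) ^ 2 / (2 * v)) := by
        gcongr
    _ = _ := by rw [exp_add]; ring

lemma gaussianPDFReal_mul_integral_sub_le {v : ℝ≥0} (hv : v ≠ 0) {g : ℝ → ℝ}
    (hg : Measurable g) (hg01 : ∀ t, g t ∈ Icc (0 : ℝ) 1) {a b : ℝ} (hab : a ≤ b) (c : ℝ) :
    gaussianPDFReal b v c * (∫ t, g t ∂gaussianReal a v - (gaussianReal a v).real (Iic c)) ≤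
      gaussianPDFReal a v c * (∫ t, g t ∂gaussianReal b v - (gaussianReal b v).real (Iic c)) := by
  set f : ℝ → ℝ := (Iic c).indicator 1 with hf
  set ψ : ℝ → ℝ → ℝ := fun m t => gaussianPDFReal m v t * (g t - f t)
  have hf_meas : Measurable f := measurable_one.indicator measurableSet_Iic
  have hf01 : ∀ t, f t ∈ Icc (0 : ℝ) 1 := fun t => by
    by_cases ht : t ∈ Iic c <;> simp [hf, ht]
  have hψ : ∀ m, Integrable (ψ m) := fun m =>
    (integrable_gaussianPDFReal m v).mul_bdd (c := 1) (hg.sub hf_meas).aestronglyMeasurable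
      (ae_of_all _ fun t => abs_sub_le_iff.2
        ⟨by linarith [(hg01 t).2, (hf01 t).1], by linarith [(hg01 t).1, (hf01 t).2]⟩)
  have hψ_eq : ∀ m, ∫ t, g t ∂gaussianReal m v - (gaussianReal m v).real (Iic c) =
      ∫ t, ψ m t := by
    intro m
    rw [← integral_indicator_one measurableSet_Iic, ← integral_sub,
      integral_gaussianReal_eq_integral_smul hv]
    · rfl
    · refine .of_bound hg.aestronglyMeasurable 1 (ae_of_all _ fun t => ?_)
      rw [Real.norm_eq_abs, abs_of_nonneg (hg01 t).1]
      exact (hg01 t).2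
    · exact (integrable_const 1).indicator measurableSet_Iic
  rw [hψ_eq, hψ_eq, ← sub_nonneg, ← integral_const_mul, ← integral_const_mul,
    ← integral_sub ((hψ b).const_mul _) ((hψ a).const_mul _)]
  have hsign : ∀ t, 0 ≤ (gaussianPDFReal a v c * gaussianPDFReal b v t -
      gaussianPDFReal b v c * gaussianPDFReal a v t) * (g t - f t) := by
    intro t
    rcases le_or_gt t c with htc | hct
    · have := gaussianPDFReal_mul_le_mul_of_le (v := v) hab htc
      refine mul_nonneg_of_nonpos_of_nonpos (by linarith) ?_
      simp [hf, htc, (hg01 t).2]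
    · have := gaussianPDFReal_mul_le_mul_of_le (v := v) hab hct.le
      refine mul_nonneg (by linarith) ?_
      simp [hf, not_le.2 hct, (hg01 t).1]
  exact integral_nonneg fun t => (hsign t).trans_eq (by simp only [ψ]; ring)

lemma measureReal_Iic_le_integral_of_le {v : ℝ≥0} (hv : v ≠ 0) {g : ℝ → ℝ}
    (hg : Measurable g) (hg01 : ∀ t, g t ∈ Icc (0 : ℝ) 1) {a b c : ℝ} (hab : a ≤ b)
    (h : (gaussianReal a v).real (Iic c) ≤ ∫ t, g t ∂gaussianReal a v) :
    (gaussianReal b v).real (Iic c) ≤ ∫ t, g t ∂gaussianReal b v := by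
  have hlhs := mul_nonneg (gaussianPDFReal_pos b v c hv).le (sub_nonneg.2 h)
  exact sub_nonneg.1 <| nonneg_of_mul_nonneg_right
    (hlhs.trans (gaussianPDFReal_mul_integral_sub_le hv hg hg01 hab c))
    (gaussianPDFReal_pos a v c hv)

lemma PhiInv_integral_gaussianReal_sub_le_of_le {σ : ℝ≥0} (hσ : σ ≠ 0) {g : ℝ → ℝ}
    (hg : Measurable g) (hg01 : ∀ t, g t ∈ Icc (0 : ℝ) 1) {a b : ℝ} (hab : a ≤ b)
    (ha : ∫ t, g t ∂gaussianReal a (σ ^ 2) ∈ Ioo 0 1)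
    (hb : ∫ t, g t ∂gaussianReal b (σ ^ 2) ∈ Ioo 0 1) :
    PhiInv (∫ t, g t ∂gaussianReal a (σ ^ 2)) - (b - a) / σ ≤
      PhiInv (∫ t, g t ∂gaussianReal b (σ ^ 2)) := by
  have hσ' : (0 : ℝ) < σ := by positivity
  set p := ∫ t, g t ∂gaussianReal a (σ ^ 2)
  -- the half-line of mass exactly `p` under `N(a, σ²)` is the extremal test
  have hp : (gaussianReal a (σ ^ 2)).real (Iic (a + σ * PhiInv p)) = p := by
    rw [gaussianReal_real_Iic hσ, add_sub_cancel_left, mul_div_cancel_left₀ _ hσ'.ne',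
      Phi_PhiInv ha]
  have hq := measureReal_Iic_le_integral_of_le (pow_ne_zero 2 hσ) hg hg01 hab hp.le
  rw [gaussianReal_real_Iic hσ, ← Phi_PhiInv hb] at hq
  refine le_of_eq_of_le ?_ (strictMono_Phi.le_iff_le.1 hq)
  field_simp
  ring

lemma integral_comp_const_add_gaussianReal (f : ℝ → ℝ) (μ : ℝ) (v : ℝ≥0) (x : ℝ) :
    ∫ u, f (x + u) ∂gaussianReal μ v = ∫ u, f u ∂gaussianReal (μ + x) v := by
  rw [← gaussianReal_map_const_add, (measurableEmbedding_addLeft x).integral_map]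

lemma integral_comp_neg_gaussianReal (f : ℝ → ℝ) (μ : ℝ) (v : ℝ≥0) :
    ∫ u, f (-u) ∂gaussianReal (-μ) v = ∫ u, f u ∂gaussianReal μ v := by
  have hneg : MeasurableEmbedding (fun u : ℝ => -u) := (Homeomorph.neg ℝ).measurableEmbedding
  rw [← gaussianReal_map_neg, hneg.integral_map]
  simp

lemma PhiInv_integral_gaussianReal_sub_le {σ : ℝ≥0} (hσ : σ ≠ 0) {g : ℝ → ℝ}
    (hg : Measurable g) (hg01 : ∀ t, g t ∈ Icc (0 : ℝ) 1) {a b : ℝ}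
    (ha : ∫ t, g t ∂gaussianReal a (σ ^ 2) ∈ Ioo 0 1)
    (hb : ∫ t, g t ∂gaussianReal b (σ ^ 2) ∈ Ioo 0 1) :
    PhiInv (∫ t, g t ∂gaussianReal a (σ ^ 2)) - PhiInv (∫ t, g t ∂gaussianReal b (σ ^ 2)) ≤
      |a - b| / σ := by
  rcases le_total a b with hab | hba
  · have := PhiInv_integral_gaussianReal_sub_le_of_le hσ hg hg01 hab ha hb
    rw [abs_sub_comm, abs_of_nonneg (sub_nonneg.2 hab)]
    linarith
  · have hrefl := integral_comp_neg_gaussianReal g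
    rw [← hrefl a] at ha ⊢
    rw [← hrefl b] at hb ⊢
    have := PhiInv_integral_gaussianReal_sub_le_of_le (g := fun t => g (-t)) hσ
      (hg.comp measurable_neg) (fun t => hg01 (-t)) (neg_le_neg hba) ha hb
    rw [neg_sub_neg] at this
    rw [abs_of_nonneg (sub_nonneg.2 hba)]
    linarith

/-- Lipschitz property of Gaussian smoothing: for `h : ℝ → [0,1]` and
`H(x) = E[h(x+ε)]`, the map `Φ⁻¹ ∘ H` is `(1/σ)`-Lipschitz wherever
`H ∈ (0,1)`. -/
theorem stmt_13 (σ : NNReal) (hσ : 0 < σ) (h : ℝ → ℝ) (hmeas : Measurable h)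
    (hrange : ∀ u, h u ∈ Set.Icc (0 : ℝ) 1) :
    ∀ x x' : ℝ,
      (∫ u, h (x + u) ∂(gaussianReal 0 (σ ^ 2))) ∈ Set.Ioo (0 : ℝ) 1 →
      (∫ u, h (x' + u) ∂(gaussianReal 0 (σ ^ 2))) ∈ Set.Ioo (0 : ℝ) 1 →
      |PhiInv (∫ u, h (x + u) ∂(gaussianReal 0 (σ ^ 2)))
        - PhiInv (∫ u, h (x' + u) ∂(gaussianReal 0 (σ ^ 2)))| ≤ |x - x'| / σ := by
  intro x x' hx hx'
  simp only [integral_comp_const_add_gaussianReal, zero_add] at hx hx' ⊢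
  refine abs_sub_le_iff.2 ⟨PhiInv_integral_gaussianReal_sub_le hσ.ne' hmeas hrange hx hx', ?_⟩
  rw [abs_sub_comm]
  exact PhiInv_integral_gaussianReal_sub_le hσ.ne' hmeas hrange hx' hx
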